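/- (Donsker–Varadhan representation) For probability measures P and Q on a measurable space Ω with P absolutely continuous with respect to Q, KL(P||Q) = sup_T { E_P[T] - log E_Q[exp(T)] }, where the supremum is over all measurable functions T: Ω → ℝ such that both expectations are finite. -/

import Mathlib

/-!
For the tilted measure `Q_T ∝ exp T • Q` one has
`E_P[T] - log E_Q[exp T] = KL(P‖Q) - KL(P‖Q_T)`, so Gibbs' inequality bounds every value of the
functional by `KL(P‖Q)`. The bound is approached by `T = log (dP/dQ)`, except that `exp (log 0) = 1`
under Lean's conventions, so `E_Q[exp T]` can exceed `1`; giving `T` the value `a` on the `P`-null set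
where the density vanishes yields `E_Q[exp T] = 1 + exp a * Q {dP/dQ = 0} → 1` as `a → -∞`.
-/

open MeasureTheory InformationTheory Real Filter Topology

namespace MeasureTheory

variable {Ω : Type*} [MeasurableSpace Ω]

def donskerVaradhanSet (P Q : Measure Ω) : Set ℝ :=
  { r : ℝ | ∃ T : Ω → ℝ, Measurable T ∧ Integrable T P ∧ Integrable (fun x => exp (T x)) Q ∧
      r = (∫ x, T x ∂P) - log (∫ x, exp (T x) ∂Q) }

lemma integral_sub_log_integral_exp_le_integral_llr {P Q : Measure Ω} [IsProbabilityMeasure P]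
    [IsProbabilityMeasure Q] (hPQ : P ≪ Q) (hint : Integrable (llr P Q) P) {T : Ω → ℝ}
    (hTP : Integrable T P) (hTQ : Integrable (fun x => exp (T x)) Q) :
    (∫ x, T x ∂P) - log (∫ x, exp (T x) ∂Q) ≤ ∫ x, llr P Q x ∂P := by
  have : IsProbabilityMeasure (Q.tilted T) := isProbabilityMeasure_tilted hTQ
  have hgibbs := integral_llr_add_sub_measure_univ_nonneg
    (hPQ.trans (absolutelyContinuous_tilted hTQ)) (integrable_llr_tilted_right hPQ hTP hint hTQ)
  rw [integral_llr_tilted_right hPQ hTP hTQ hint] at hgibbs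
  simp only [probReal_univ, add_sub_cancel_right] at hgibbs
  linarith

lemma integral_llr_mem_upperBounds_donskerVaradhanSet {P Q : Measure Ω} [IsProbabilityMeasure P]
    [IsProbabilityMeasure Q] (hPQ : P ≪ Q) (hint : Integrable (llr P Q) P) :
    ∫ x, llr P Q x ∂P ∈ upperBounds (donskerVaradhanSet P Q) := by
  rintro r ⟨T, -, hTP, hTQ, rfl⟩
  exact integral_sub_log_integral_exp_le_integral_llr hPQ hint hTP hTQ

noncomputable def llrWithNullValue (P Q : Measure Ω) (a : ℝ) : Ω → ℝ :=
  {x | (P.rnDeriv Q x).toReal = 0}.piecewise (fun _ => a) (llr P Q)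

lemma exp_llrWithNullValue (P Q : Measure Ω) (a : ℝ) :
    (fun x => exp (llrWithNullValue P Q a x)) = fun x =>
      (P.rnDeriv Q x).toReal + {x | (P.rnDeriv Q x).toReal = 0}.indicator (fun _ => exp a) x := by
  ext x
  by_cases hx : (P.rnDeriv Q x).toReal = 0
  · simp [llrWithNullValue, hx]
  · simp [llrWithNullValue, hx, llr, exp_log (lt_of_le_of_ne ENNReal.toReal_nonneg (Ne.symm hx))]

lemma measurableSet_toReal_rnDeriv_eq_zero (P Q : Measure Ω) :
    MeasurableSet {x | (P.rnDeriv Q x).toReal = 0} :=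
  (Measure.measurable_rnDeriv P Q).ennreal_toReal (measurableSet_singleton 0)

section
variable {P Q : Measure Ω}

lemma llrWithNullValue_ae_eq [SigmaFinite P] [SigmaFinite Q] (hPQ : P ≪ Q) (a : ℝ) : llrWithNullValue P Q a =ᵐ[P] llr P Q := by
  filter_upwards [Measure.rnDeriv_pos hPQ, hPQ.ae_le (Measure.rnDeriv_lt_top P Q)] with x h0 htop
  simp [llrWithNullValue, ENNReal.toReal_eq_zero_iff, h0.ne', htop.ne]

lemma integrable_exp_llrWithNullValue [IsFiniteMeasure P] [IsFiniteMeasure Q] (a : ℝ) :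
    Integrable (fun x => exp (llrWithNullValue P Q a x)) Q := by
  rw [exp_llrWithNullValue]
  exact Measure.integrable_toReal_rnDeriv.add
    ((integrable_const _).indicator (measurableSet_toReal_rnDeriv_eq_zero P Q))

lemma integral_exp_llrWithNullValue [IsFiniteMeasure P] [IsFiniteMeasure Q] (hPQ : P ≪ Q)
    (a : ℝ) : ∫ x, exp (llrWithNullValue P Q a x) ∂Q
      = P.real Set.univ + exp a * Q.real {x | (P.rnDeriv Q x).toReal = 0} := by
  rw [exp_llrWithNullValue, integral_add Measure.integrable_toReal_rnDeriv
    ((integrable_const _).indicator (measurableSet_toReal_rnDeriv_eq_zero P Q)),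
    Measure.integral_toReal_rnDeriv hPQ,
    integral_indicator_const _ (measurableSet_toReal_rnDeriv_eq_zero P Q),
    smul_eq_mul, mul_comm]

variable [IsProbabilityMeasure P] [IsProbabilityMeasure Q]

lemma integral_llr_sub_log_mem_donskerVaradhanSet (hPQ : P ≪ Q) (hint : Integrable (llr P Q) P)
    (a : ℝ) : ∫ x, llr P Q x ∂P - log (1 + exp a * Q.real {x | (P.rnDeriv Q x).toReal = 0})
      ∈ donskerVaradhanSet P Q := by
  refine ⟨llrWithNullValue P Q a, ?_, hint.congr (llrWithNullValue_ae_eq hPQ a).symm,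
    integrable_exp_llrWithNullValue a, ?_⟩
  · exact (measurable_const.piecewise (measurableSet_toReal_rnDeriv_eq_zero P Q)
      (measurable_llr P Q))
  · rw [integral_exp_llrWithNullValue hPQ, probReal_univ, integral_congr_ae (llrWithNullValue_ae_eq hPQ a)]

lemma isLUB_donskerVaradhanSet (hPQ : P ≪ Q) (hint : Integrable (llr P Q) P) :
    IsLUB (donskerVaradhanSet P Q) (∫ x, llr P Q x ∂P) := by
  refine isLUB_of_mem_closure (integral_llr_mem_upperBounds_donskerVaradhanSet hPQ hint)
    (mem_closure_of_tendsto (b := atBot) ?_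
      (Eventually.of_forall (integral_llr_sub_log_mem_donskerVaradhanSet hPQ hint)))
  have hlog := ((tendsto_exp_atBot.mul_const (Q.real {x | (P.rnDeriv Q x).toReal = 0})).const_add
    1).log (by simp)
  simpa using hlog.const_sub (∫ x, llr P Q x ∂P)

end

end MeasureTheory

/-- Donsker–Varadhan representation of the KL divergence:
`KL(P‖Q) = sup_T { E_P[T] - log E_Q[exp T] }`. -/
theorem stmt_5 {Ω : Type*} [MeasurableSpace Ω]
    (P Q : Measure Ω) [IsProbabilityMeasure P] [IsProbabilityMeasure Q]
    (hPQ : P ≪ Q)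
    (hint : Integrable (fun x => Real.log ((P.rnDeriv Q x).toReal)) P) :
    ∫ x, Real.log ((P.rnDeriv Q x).toReal) ∂P
      = sSup { r : ℝ | ∃ T : Ω → ℝ, Measurable T ∧ Integrable T P ∧
          Integrable (fun x => Real.exp (T x)) Q ∧
          r = (∫ x, T x ∂P) - Real.log (∫ x, Real.exp (T x) ∂Q) } := by
  have hLUB := isLUB_donskerVaradhanSet hPQ hint
  exact (hLUB.csSup_eq ⟨_, integral_llr_sub_log_mem_donskerVaradhanSet hPQ hint 0⟩).symm
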